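/- arXiv:1301.3176 — 3 statements merged into one kernel-verified Lean document; each statement's English description precedes it below -/
import Mathlib

section
/- Let T be a Markov transformation of a σ-finite measure space (X, m) with Markov partition β, with m(a) < ∞ for every a ∈ β and T having the Strong Distortion Property. If a ∈ β is recurrent, then for m-a.e. x ∈ a the orbit returns to a infinitely often, i.e. Tʳx ∈ a for infinitely many r ≥ 1. -/
open MeasureTheory Set Filter
open scoped ENNReal

namespace DWDEPaper

variable {X : Type*}

/-- The cylinder set `[w₀, …, w_{n-1}] = ⋂_{j<n} T^{-j} w_j` determined by a word of sets. -/
def cyl (T : X → X) (w : List (Set X)) : Set X :=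
  {x | ∀ j : Fin w.length, T^[(j : ℕ)] x ∈ w.get j}

/-- `c` is an `n`-cylinder for `T` with respect to the partition `β`. -/
def IsCyl (T : X → X) (β : Set (Set X)) (n : ℕ) (c : Set X) : Prop :=
  ∃ w : List (Set X), w.length = n ∧ (∀ s ∈ w, s ∈ β) ∧ c = cyl T w

/-- `T` is a (non-singular) Markov transformation of `(X, m)` with countable measurable
Markov partition `β`: `β` is a countable measurable partition of `X`, the image of each
partition element is a union of partition elements, and `T` is injective on each
partition element (hence a bijection onto its image). -/
structure IsMarkovMap [MeasurableSpace X] (T : X → X) (m : Measure X)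
    (β : Set (Set X)) : Prop where
  measurable : Measurable T
  nonsingular : ∀ A : Set X, MeasurableSet A → m A = 0 → m (T ⁻¹' A) = 0
  countable : β.Countable
  measurableSet : ∀ a ∈ β, MeasurableSet a
  pairwiseDisjoint : ∀ a ∈ β, ∀ b ∈ β, a ≠ b → Disjoint a b
  sUnion_eq : ⋃₀ β = univ
  image_sUnion : ∀ a ∈ β, ∃ s ⊆ β, T '' a = ⋃₀ s
  injOn : ∀ a ∈ β, InjOn T a

/-- The Strong Distortion Property: there is `D ≥ 1` such that for every `n ≥ 1` and every
`n`-cylinder `c` there is a Radon–Nikodym derivative `v` with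
`∫_{Tⁿc ∩ B} v dm = m (c ∩ T⁻ⁿ B)` for all measurable `B`, and `v x ≤ D * v y` for
a.e. `x, y ∈ Tⁿ c`. -/
def StrongDistortion [MeasurableSpace X] (T : X → X) (m : Measure X)
    (β : Set (Set X)) : Prop :=
  ∃ D : ℝ≥0∞, 1 ≤ D ∧ ∀ n : ℕ, 1 ≤ n → ∀ c : Set X, IsCyl T β n c →
    ∃ v : X → ℝ≥0∞,
      (∀ B : Set X, MeasurableSet B →
        ∫⁻ x in (T^[n] '' c) ∩ B, v x ∂m = m (c ∩ T^[n] ⁻¹' B)) ∧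
      ∃ N : Set X, m N = 0 ∧
        ∀ x ∈ (T^[n] '' c) \ N, ∀ y ∈ (T^[n] '' c) \ N, v x ≤ D * v y

/-- The Big Image Property: `inf_{a ∈ β} m (T a) > 0`. -/
def BigImages [MeasurableSpace X] (T : X → X) (m : Measure X) (β : Set (Set X)) : Prop :=
  ∃ ε : ℝ≥0∞, 0 < ε ∧ ∀ a ∈ β, ε ≤ m (T '' a)

/-- A set `a` is recurrent if a.e. point of `a` returns to `a` at some time `n ≥ 1`. -/
def RecurrentElem [MeasurableSpace X] (T : X → X) (m : Measure X) (a : Set X) : Prop :=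
  m {x ∈ a | ∀ n : ℕ, 1 ≤ n → T^[n] x ∉ a} = 0

/-- `a` communicates with `b` if a positive measure set of points of `a` visits `b`. -/
def Communicates [MeasurableSpace X] (T : X → X) (m : Measure X) (a b : Set X) : Prop :=
  0 < m {x ∈ a | ∃ n : ℕ, 1 ≤ n ∧ T^[n] x ∈ b}

def Intercommunicates [MeasurableSpace X] (T : X → X) (m : Measure X) (a b : Set X) : Prop :=
  Communicates T m a b ∧ Communicates T m b a

/-- `C` is a communication class of the partition `β` under `T`: a nonempty subset of `β`
whose elements pairwise intercommunicate (or coincide), and which is closed under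
intercommunication within `β`. -/
def IsCommClass [MeasurableSpace X] (T : X → X) (m : Measure X)
    (β : Set (Set X)) (C : Set (Set X)) : Prop :=
  C ⊆ β ∧ C.Nonempty ∧
  (∀ a ∈ C, ∀ b ∈ C, a = b ∨ Intercommunicates T m a b) ∧
  (∀ a ∈ C, ∀ b ∈ β, Intercommunicates T m a b → b ∈ C)

/-- The Markov partition `β` separates points: distinct points eventually lie in disjoint
cylinders. -/
def SeparatesPoints (T : X → X) (β : Set (Set X)) : Prop :=
  ∀ x y : X, x ≠ y → ∃ n : ℕ, 1 ≤ n ∧ ∃ a c : Set X,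
    IsCyl T β n a ∧ IsCyl T β n c ∧ a ∩ c = ∅ ∧ x ∈ a ∧ y ∈ c

/-- Lemma: recurrence implies infinitely many returns.  If `a ∈ β` is
recurrent then for `m`-a.e. `x ∈ a` the orbit of `x` returns to `a` infinitely often. -/
theorem statement1 [MeasurableSpace X] (T : X → X) (m : Measure X) [SigmaFinite m]
    (β : Set (Set X)) (hT : IsMarkovMap T m β)
    (hfin : ∀ a ∈ β, m a < ⊤) (hSD : StrongDistortion T m β)
    (a : Set X) (ha : a ∈ β) (hrec : RecurrentElem T m a) :
    m {x ∈ a | ¬ {r : ℕ | 1 ≤ r ∧ T^[r] x ∈ a}.Infinite} = 0 := by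
  classical
  set W : Set X := {x ∈ a | ∀ n : ℕ, 1 ≤ n → T^[n] x ∉ a} with hWdef
  have hma : MeasurableSet a := hT.measurableSet a ha
  have hWmeas : MeasurableSet W := by
    have : W = a ∩ ⋂ n : ℕ, ⋂ _h : 1 ≤ n, (T^[n]) ⁻¹' aᶜ := by
      ext x
      simp [hWdef, Set.mem_iInter, Set.mem_preimage]
    rw [this]
    exact hma.inter (MeasurableSet.iInter fun n => MeasurableSet.iInter fun _ =>
      (hT.measurable.iterate n) hma.compl)
  have hW0 : m W = 0 := hrec
  have hpre : ∀ r : ℕ, m ((T^[r]) ⁻¹' W) = 0 := by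
    intro r
    induction r with
    | zero => simpa using hW0
    | succ r ih =>
      have : (T^[r + 1]) ⁻¹' W = T ⁻¹' ((T^[r]) ⁻¹' W) := by
        rw [Function.iterate_succ]
        rfl
      rw [this]
      exact hT.nonsingular _ ((hT.measurable.iterate r) hWmeas) ih
  have hsub : {x ∈ a | ¬ {r : ℕ | 1 ≤ r ∧ T^[r] x ∈ a}.Infinite} ⊆
      ⋃ r : ℕ, (T^[r]) ⁻¹' W := by
    rintro x ⟨hxa, hfinS⟩
    have hSf : {r : ℕ | 1 ≤ r ∧ T^[r] x ∈ a}.Finite := Set.not_infinite.mp hfinS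
    rcases Set.eq_empty_or_nonempty {r : ℕ | 1 ≤ r ∧ T^[r] x ∈ a} with hS | hS
    · refine Set.mem_iUnion.mpr ⟨0, ?_⟩
      simp only [Function.iterate_zero, Set.preimage_id, id]
      refine ⟨hxa, fun n hn hna => ?_⟩
      have : n ∈ {r : ℕ | 1 ≤ r ∧ T^[r] x ∈ a} := ⟨hn, hna⟩
      simp [hS] at this
    · obtain ⟨r, hrS, hmax⟩ := Set.Finite.exists_maximalFor id _ hSf hS
      refine Set.mem_iUnion.mpr ⟨r, ?_⟩
      refine ⟨hrS.2, fun n hn hna => ?_⟩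
      have hmem : n + r ∈ {r | 1 ≤ r ∧ T^[r] x ∈ a} := by
        refine ⟨le_trans hrS.1 (Nat.le_add_left r n), ?_⟩
        rwa [Function.iterate_add_apply]
      have := hmax hmem (Nat.le_add_left r n)
      simp only [id] at this
      omega
  exact measure_mono_null hsub (measure_iUnion_null hpre)

end DWDEPaper
end

section
/- Let T be a Markov transformation of a probability space (X, m) with Markov partition β that has the Strong Distortion Property, let S be a countable set, and let (f_k)_{k∈S} be an environment of transition functions f_i : X → S, each measurable and constant on elements of β. Then the skew product T_f : X×S → X×S, T_f(x, i) = (Tx, f_i(x)), has the Strong Distortion Property with respect to the measure μ (the product of m with counting measure), with Markov partition β̃ = β×S. -/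
open MeasureTheory Set Filter
open scoped ENNReal

namespace DWDEPaper

variable {X : Type*}

section Skew

variable {S : Type*}

/-- The skew product `T_f(x, i) = (Tx, f_i(x))` of the base map `T` with the
environment `(f_i)_{i ∈ S}`. -/
def skew (T : X → X) (f : S → X → S) : X × S → X × S :=
  fun p => (T p.1, f p.2 p.1)

/-- The product Markov partition `β̃ = β × S = {a × {i} : a ∈ β, i ∈ S}`. -/
def prodPart (β : Set (Set X)) : Set (Set (X × S)) :=
  {s | ∃ a ∈ β, ∃ i : S, s = a ×ˢ ({i} : Set S)}

/-- The projection `π₂(C) = {i ∈ S : a × {i} ∈ C for some a ∈ β}` of a collection of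
product partition elements. -/
def proj2 (β : Set (Set X)) (C : Set (Set (X × S))) : Set S :=
  {i : S | ∃ a ∈ β, a ×ˢ ({i} : Set S) ∈ C}

end Skew


section AuxLemmas

lemma mem_cyl {T : X → X} {w : List (Set X)} {x : X} :
    x ∈ cyl T w ↔ ∀ j : Fin w.length, T^[(j : ℕ)] x ∈ w.get j := Iff.rfl

lemma mem_cyl_iff {T : X → X} {w : List (Set X)} {x : X} :
    x ∈ cyl T w ↔ ∀ j, ∀ hj : j < w.length, T^[j] x ∈ w.get ⟨j, hj⟩ :=
  ⟨fun H j hj => H ⟨j, hj⟩, fun H j => H j j.2⟩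

lemma get_map_eq {α β : Type*} (g : α → β) (w : List α) (j : ℕ) (hj : j < w.length)
    (hj' : j < (w.map g).length) :
    (w.map g).get ⟨j, hj'⟩ = g (w.get ⟨j, hj⟩) := by
  simp [List.get_eq_getElem]

lemma skew_iterate_fst {S : Type*} (T : X → X) (f : S → X → S) :
    ∀ (n : ℕ) (p : X × S), ((skew T f)^[n] p).1 = T^[n] p.1 := by
  intro n
  induction n with
  | zero => intro p; rfl
  | succ n ih =>
    intro p
    rw [Function.iterate_succ_apply, Function.iterate_succ_apply]
    exact ih _

lemma skew_iterate_snd_const {S : Type*} (T : X → X) (f : S → X → S) (β : Set (Set X))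
    (hconst : ∀ i : S, ∀ a ∈ β, ∀ x ∈ a, ∀ y ∈ a, f i x = f i y)
    (n : ℕ) (x y : X) (k : S)
    (h : ∀ l, l < n → ∃ a ∈ β, T^[l] x ∈ a ∧ T^[l] y ∈ a) :
    ((skew T f)^[n] (x, k)).2 = ((skew T f)^[n] (y, k)).2 := by
  induction n with
  | zero => rfl
  | succ n ih =>
    rw [Function.iterate_succ_apply', Function.iterate_succ_apply']
    obtain ⟨a, ha, hx, hy⟩ := h n (Nat.lt_succ_self n)
    have h2 := ih (fun l hl => h l (hl.trans (Nat.lt_succ_self n)))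
    simp only [skew]
    rw [skew_iterate_fst, skew_iterate_fst, h2]
    exact hconst _ a ha _ hx _ hy

section MeasureAux

variable {S : Type*} [MeasurableSpace X] [MeasurableSpace S] [MeasurableSingletonClass S]
  [Countable S]

lemma sfinite_count : SFinite (Measure.count : Measure S) := by
  unfold Measure.count; infer_instance

lemma meas_prod_singleton (m : Measure X) (V : Set X) (i : S) :
    (m.prod Measure.count) (V ×ˢ ({i} : Set S)) = m V := by
  haveI := sfinite_count (S := S)
  rw [Measure.prod_prod, Measure.count_singleton, mul_one]

lemma restrict_prod_singleton (m : Measure X) {B : Set (X × S)} (hB : MeasurableSet B)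
    (U : Set X) (i : S) :
    (m.prod Measure.count).restrict ((U ×ˢ ({i} : Set S)) ∩ B) =
      (m.restrict (U ∩ (fun y => (y, i)) ⁻¹' B)).map (fun y => (y, i)) := by
  ext A hA
  rw [Measure.restrict_apply hA,
    Measure.map_apply measurable_prodMk_right hA,
    Measure.restrict_apply (measurable_prodMk_right hA)]
  have hset : A ∩ ((U ×ˢ ({i} : Set S)) ∩ B) =
      (((fun y => (y, i)) ⁻¹' (A ∩ B)) ∩ U) ×ˢ ({i} : Set S) := by
    ext ⟨x, k⟩
    simp only [Set.mem_inter_iff, Set.mem_prod, Set.mem_singleton_iff, Set.mem_preimage]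
    constructor
    · rintro ⟨hA, ⟨hU, rfl⟩, hB⟩
      exact ⟨⟨⟨hA, hB⟩, hU⟩, rfl⟩
    · rintro ⟨⟨⟨hA, hB⟩, hU⟩, rfl⟩
      exact ⟨hA, ⟨hU, rfl⟩, hB⟩
  rw [hset, meas_prod_singleton]
  congr 1
  ext x
  simp only [Set.mem_inter_iff, Set.mem_preimage]
  tauto

lemma lintegral_slice (m : Measure X) {B : Set (X × S)} (hB : MeasurableSet B)
    (U : Set X) (i : S) (v : X → ℝ≥0∞) :
    ∫⁻ p in (U ×ˢ ({i} : Set S)) ∩ B, v p.1 ∂(m.prod Measure.count)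
      = ∫⁻ y in U ∩ (fun y => (y, i)) ⁻¹' B, v y ∂m := by
  rw [restrict_prod_singleton m hB U i,
    (measurableEmbedding_prod_mk_right i).lintegral_map]

end MeasureAux

end AuxLemmas

/-- Proposition: the skew product has Strong Distortion.  If `T` is a
Markov map of a probability space `(X, m)` with Markov partition `β` having the Strong
Distortion Property, `S` is countable, and each transition function `f_i : X → S` is
measurable and constant on elements of `β`, then the skew product
`T_f(x, i) = (Tx, f_i(x))` has the Strong Distortion Property on `(X × S, μ)`,
`μ = m × counting measure`, with respect to the Markov partition `β̃ = β × S`. -/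
theorem statement7 {S : Type*} [MeasurableSpace X] [MeasurableSpace S]
    [MeasurableSingletonClass S] [Countable S]
    (T : X → X) (m : Measure X) [IsProbabilityMeasure m]
    (β : Set (Set X)) (hT : IsMarkovMap T m β) (hSD : StrongDistortion T m β)
    (f : S → X → S) (hf : ∀ i : S, Measurable (f i))
    (hconst : ∀ i : S, ∀ a ∈ β, ∀ x ∈ a, ∀ y ∈ a, f i x = f i y) :
    StrongDistortion (skew T f) (m.prod Measure.count) (prodPart β) := by
  classical
  haveI := sfinite_count (S := S)
  obtain ⟨D, hD1, hD⟩ := hSD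
  refine ⟨D, hD1, ?_⟩
  intro n hn c hc
  obtain ⟨w, hwlen, hwmem, rfl⟩ := hc
  subst hwlen
  by_cases hne : (cyl (skew T f) w).Nonempty
  swap
  · rw [Set.not_nonempty_iff_eq_empty] at hne
    refine ⟨fun _ => 0, ?_, ∅, measure_empty, ?_⟩
    · intro B hB
      simp [hne]
    · simp [hne]
  obtain ⟨⟨x₀, k₀⟩, hp₀⟩ := hne
  set g : Set (X × S) → Set X := fun s => Prod.fst '' s with hg
  have hkey : ∀ j, ∀ hj : j < w.length, g (w.get ⟨j, hj⟩) ∈ β ∧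
      w.get ⟨j, hj⟩ = (g (w.get ⟨j, hj⟩)) ×ˢ ({((skew T f)^[j] (x₀, k₀)).2} : Set S) := by
    intro j hj
    obtain ⟨a, ha, i, hi⟩ := hwmem (w.get ⟨j, hj⟩) (w.get_mem ⟨j, hj⟩)
    have hmem : (skew T f)^[j] (x₀, k₀) ∈ w.get ⟨j, hj⟩ := mem_cyl.mp hp₀ ⟨j, hj⟩
    rw [hi] at hmem
    obtain ⟨hfst, hsnd⟩ := hmem
    have hieq : i = ((skew T f)^[j] (x₀, k₀)).2 := (Set.mem_singleton_iff.mp hsnd).symm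
    have hgi : g (a ×ˢ ({i} : Set S)) = a := Set.fst_image_prod a (Set.singleton_nonempty i)
    rw [hi, hgi, ← hieq]
    exact ⟨ha, rfl⟩
  set A : Set X := cyl T (w.map g) with hA
  have hAiff : ∀ x, x ∈ A ↔ ∀ j, ∀ hj : j < w.length, T^[j] x ∈ g (w.get ⟨j, hj⟩) := by
    intro x
    rw [hA, mem_cyl_iff]
    constructor
    · intro H j hj
      have := H j (by simpa using hj)
      rwa [get_map_eq g w j hj] at this
    · intro H j hj
      rw [get_map_eq g w j (by simpa using hj)]
      exact H j _
  have hx₀A : x₀ ∈ A := by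
    rw [hAiff]
    intro j hj
    exact ⟨_, mem_cyl.mp hp₀ ⟨j, hj⟩, skew_iterate_fst T f j _⟩
  have hsnd : ∀ x, x ∈ A → ∀ j, j ≤ w.length →
      ((skew T f)^[j] (x, k₀)).2 = ((skew T f)^[j] (x₀, k₀)).2 := by
    intro x hx j hjle
    refine skew_iterate_snd_const T f β hconst j x x₀ k₀ ?_
    intro l hl
    have hlw : l < w.length := lt_of_lt_of_le hl hjle
    exact ⟨g (w.get ⟨l, hlw⟩), (hkey l hlw).1, (hAiff x).mp hx l hlw,
      (hAiff x₀).mp hx₀A l hlw⟩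
  have hpair : ∀ x, x ∈ A → ∀ j, j ≤ w.length →
      (skew T f)^[j] (x, k₀) = (T^[j] x, ((skew T f)^[j] (x₀, k₀)).2) := by
    intro x hx j hj
    exact Prod.ext (skew_iterate_fst T f j _) (hsnd x hx j hj)
  have hceq : cyl (skew T f) w = A ×ˢ ({k₀} : Set S) := by
    ext ⟨x, k⟩
    constructor
    · intro hxk
      have hxA : x ∈ A := by
        rw [hAiff]
        intro j hj
        exact ⟨_, mem_cyl.mp hxk ⟨j, hj⟩, skew_iterate_fst T f j _⟩
      have h0 : 0 < w.length := hn
      have h1 := mem_cyl.mp hxk ⟨0, h0⟩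
      rw [(hkey 0 h0).2] at h1
      obtain ⟨-, hk⟩ := h1
      simp only [Function.iterate_zero, id_eq, Set.mem_singleton_iff] at hk
      exact ⟨hxA, by simpa using hk⟩
    · rintro ⟨hxA, hk⟩
      simp only [Set.mem_singleton_iff] at hk
      subst hk
      rw [mem_cyl]
      intro j
      have hj2 : (j : ℕ) < w.length := j.2
      rw [show w.get j = w.get ⟨(j : ℕ), hj2⟩ from rfl, (hkey (j : ℕ) hj2).2]
      refine ⟨?_, ?_⟩
      · rw [skew_iterate_fst]
        exact (hAiff x).mp hxA (j : ℕ) hj2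
      · exact hsnd x hxA (j : ℕ) (le_of_lt hj2)
  have himg : (skew T f)^[w.length] '' (A ×ˢ ({k₀} : Set S)) =
      (T^[w.length] '' A) ×ˢ ({((skew T f)^[w.length] (x₀, k₀)).2} : Set S) := by
    ext ⟨y, k⟩
    constructor
    · rintro ⟨⟨x, k'⟩, ⟨hxA, hk'⟩, heq⟩
      simp only [Set.mem_singleton_iff] at hk'
      subst hk'
      rw [hpair x hxA _ le_rfl, Prod.mk.injEq] at heq
      obtain ⟨rfl, rfl⟩ := heq
      exact ⟨⟨x, hxA, rfl⟩, rfl⟩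
    · rintro ⟨⟨x, hxA, rfl⟩, hk⟩
      simp only [Set.mem_singleton_iff] at hk
      subst hk
      exact ⟨(x, k₀), ⟨hxA, rfl⟩, hpair x hxA _ le_rfl⟩
  have hsetB : ∀ B : Set (X × S),
      (A ×ˢ ({k₀} : Set S)) ∩ (skew T f)^[w.length] ⁻¹' B =
        (A ∩ T^[w.length] ⁻¹'
            ((fun y => (y, ((skew T f)^[w.length] (x₀, k₀)).2)) ⁻¹' B))
          ×ˢ ({k₀} : Set S) := by
    intro B
    ext ⟨x, k⟩
    simp only [Set.mem_inter_iff, Set.mem_prod, Set.mem_singleton_iff, Set.mem_preimage]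
    constructor
    · rintro ⟨⟨hxA, rfl⟩, hB⟩
      rw [hpair x hxA _ le_rfl] at hB
      exact ⟨⟨hxA, hB⟩, rfl⟩
    · rintro ⟨⟨hxA, hB⟩, rfl⟩
      refine ⟨⟨hxA, rfl⟩, ?_⟩
      rw [hpair x hxA _ le_rfl]
      exact hB
  have hAcyl : IsCyl T β w.length A := by
    refine ⟨w.map g, by simp, ?_, rfl⟩
    intro s hs
    rw [List.mem_map] at hs
    obtain ⟨t, ht, rfl⟩ := hs
    rw [List.mem_iff_get] at ht
    obtain ⟨j, rfl⟩ := ht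
    exact (hkey (j : ℕ) j.2).1
  obtain ⟨v, hv, N, hN, hdist⟩ := hD w.length hn A hAcyl
  refine ⟨fun p => v p.1, ?_, N ×ˢ (Set.univ : Set S), ?_, ?_⟩
  · intro B hB
    rw [hceq, himg, hsetB B, meas_prod_singleton,
      lintegral_slice m hB _ _ v,
      hv _ (measurable_prodMk_right hB)]
  · rw [Measure.prod_prod, hN, zero_mul]
  · intro p hp q hq
    rw [hceq, himg] at hp hq
    obtain ⟨⟨hp1, -⟩, hpN⟩ := hp
    obtain ⟨⟨hq1, -⟩, hqN⟩ := hq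
    have hpN' : p.1 ∉ N := fun h => hpN ⟨h, trivial⟩
    have hqN' : q.1 ∉ N := fun h => hqN ⟨h, trivial⟩
    exact hdist p.1 ⟨hp1, hpN'⟩ q.1 ⟨hq1, hqN'⟩


end DWDEPaper
end

section
/- Let a DWDE on ℤ have an ergodic and stationary environment and be driven by a full-branch Gibbs–Markov transformation T of a probability space (X, m) with finite Markov partition β and Gibbs potential h. Suppose there exists 1 ≤ r ≤ #β − 1 such that every transition function f ∈ G takes only the values +1 and −1, with #{a ∈ β : f(a) = +1} = r and #{a ∈ β : f(a) = −1} = #β − r. Then: (i) if inf h > (1/2)·ln(4r(#β − r)) and r > #β/2, then lim_{n→∞} U_{i,n}(x, ω) = +∞ for all i ∈ ℤ, for P-a.e. ω and m-a.e. x; (ii) if inf h > (1/2)·ln(4r(#β − r)) and r < #β/2, then lim_{n→∞} U_{i,n}(x, ω) = −∞ for all i ∈ ℤ, for P-a.e. ω and m-a.e. x. -/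
open MeasureTheory Set Filter
open scoped ENNReal

namespace DWDEPaper

variable {X : Type*}

section DWDE

variable {Ω : Type*}

/-- The product of `m` with counting measure on `X × ℤ`. -/
noncomputable def muZ [MeasurableSpace X] (m : Measure X) : Measure (X × ℤ) :=
  m.prod Measure.count

/-- The skew product `T_{f}(x, i) = (Tx, i + f_i(x))` on `X × ℤ` for an environment
`e = (f_i)_{i ∈ ℤ}` of increment functions. -/
def dwSkew (T : X → X) (e : ℤ → X → ℤ) : X × ℤ → X × ℤ :=
  fun p => (T p.1, p.2 + e p.2 p.1)

/-- The environment encoded by `ω`: `f_i := φ(η^i ω)`. -/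
def env (η : Equiv.Perm Ω) (φ : Ω → X → ℤ) (ω : Ω) : ℤ → X → ℤ :=
  fun i => φ ((η ^ i) ω)

/-- The deterministic walk in a deterministic environment:
`U_{i,n}(x, ω) = π₂(T_{f(ω)}ⁿ(x, i))`. -/
def dwWalk (T : X → X) (η : Equiv.Perm Ω) (φ : Ω → X → ℤ) (ω : Ω)
    (i : ℤ) (n : ℕ) (x : X) : ℤ :=
  ((dwSkew T (env η φ ω))^[n] (x, i)).2

/-- The DWDE is irreducible: for `P`-a.e. `ω`, all elements of `β̃ = β × ℤ`
(inter)communicate under `T_{f(ω)}` with respect to `μ = m × counting measure`. -/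
def DWIrreducible [MeasurableSpace X] [MeasurableSpace Ω] (T : X → X) (m : Measure X)
    (β : Set (Set X)) (η : Equiv.Perm Ω) (φ : Ω → X → ℤ) (P : Measure Ω) : Prop :=
  ∀ᵐ ω ∂P, ∀ a ∈ prodPart (S := ℤ) β, ∀ b ∈ prodPart (S := ℤ) β,
    Communicates (dwSkew T (env η φ ω)) (muZ m) a b

/-- Bounded jumps: every transition function has finite range. -/
def BddJumps (φ : Ω → X → ℤ) : Prop :=
  ∀ ω : Ω, (Set.range (φ ω)).Finite

/-- Uniformly bounded jumps: all transition functions take values in one finite set. -/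
def UnifBddJumps (φ : Ω → X → ℤ) : Prop :=
  ∃ J : Finset ℤ, ∀ (ω : Ω) (x : X), φ ω x ∈ J

/-- The Linkage Property: the DWDE is irreducible and there is `r > 0` such that for
`P`-a.e. environment and all `a × {i}, b × {j} ∈ β̃` with `|i − j| = 1`, either
`b × {j} ⊆ T_f(a × {i})` or there is a cylinder `c` (a word over `β̃`) with `μ(c) ≥ r`
such that the concatenated cylinder `(a × {i})·c·(b × {j})` is admissible. -/
def Linkage [MeasurableSpace X] [MeasurableSpace Ω] (T : X → X) (m : Measure X)
    (β : Set (Set X)) (η : Equiv.Perm Ω) (φ : Ω → X → ℤ) (P : Measure Ω) : Prop :=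
  DWIrreducible T m β η φ P ∧
  ∃ r : ℝ≥0∞, 0 < r ∧ ∀ᵐ ω ∂P,
    ∀ a ∈ β, ∀ b ∈ β, ∀ i j : ℤ, |i - j| = 1 →
      (b ×ˢ ({j} : Set ℤ) ⊆ dwSkew T (env η φ ω) '' (a ×ˢ ({i} : Set ℤ)) ∨
        ∃ w : List (Set (X × ℤ)), (∀ s ∈ w, s ∈ prodPart (S := ℤ) β) ∧
          r ≤ muZ m (cyl (dwSkew T (env η φ ω)) w) ∧
          0 < muZ m (cyl (dwSkew T (env η φ ω))
            ([a ×ˢ ({i} : Set ℤ)] ++ w ++ [b ×ˢ ({j} : Set ℤ)])))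

/-- The strip `Λ_j = {(x, n) : jM ≤ n ≤ (j+1)M − 1}`. -/
def lam (M : ℤ) (j : ℤ) : Set (X × ℤ) :=
  {p : X × ℤ | j * M ≤ p.2 ∧ p.2 ≤ (j + 1) * M - 1}

/-- The taboo-hitting-time set `ⱼA_{i,k}`: points of `Λ_i` that reach `Λ_k` at some time
`n ≥ 1` without previously visiting `Λ_k ∪ Λ_j`. -/
def taboo (Tf : X × ℤ → X × ℤ) (M : ℤ) (j i k : ℤ) : Set (X × ℤ) :=
  {z ∈ lam M i | ∃ n : ℕ, 1 ≤ n ∧ Tf^[n] z ∈ lam M k ∧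
    ∀ r : ℕ, 1 ≤ r → r < n → Tf^[r] z ∉ lam M k ∪ lam M j}

/-- `D⁺`: environments for which a positive `μ`-measure of points of `Λ₀` diverge
to `+∞`. -/
def Dplus [MeasurableSpace X] (T : X → X) (m : Measure X)
    (η : Equiv.Perm Ω) (φ : Ω → X → ℤ) (M : ℤ) : Set Ω :=
  {ω | 0 < muZ m {z ∈ lam (X := X) M 0 |
    Tendsto (fun n : ℕ => ((dwSkew T (env η φ ω))^[n] z).2) atTop atTop}}

/-- `D⁻`: environments for which a positive `μ`-measure of points of `Λ₀` diverge
to `−∞`. -/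
def Dminus [MeasurableSpace X] (T : X → X) (m : Measure X)
    (η : Equiv.Perm Ω) (φ : Ω → X → ℤ) (M : ℤ) : Set Ω :=
  {ω | 0 < muZ m {z ∈ lam (X := X) M 0 |
    Tendsto (fun n : ℕ => ((dwSkew T (env η φ ω))^[n] z).2) atTop atBot}}

/-- `E⁺`: environments `ω` for which there is `p > 0` with
`μ(₋ₖA_{−k,0}(ω)) ≥ p` for infinitely many `k ≥ 1`. -/
def Eplus [MeasurableSpace X] (T : X → X) (m : Measure X)
    (η : Equiv.Perm Ω) (φ : Ω → X → ℤ) (M : ℤ) : Set Ω :=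
  {ω | ∃ p : ℝ≥0∞, 0 < p ∧
    {k : ℕ | 1 ≤ k ∧ p ≤ muZ m
      (taboo (dwSkew T (env η φ ω)) M (-(k : ℤ)) (-(k : ℤ)) 0)}.Infinite}

/-- The DWDE is recurrent: for `P`-a.e. `ω`, every state `i` is recurrent. -/
def DWRecurrent [MeasurableSpace X] [MeasurableSpace Ω] (T : X → X) (m : Measure X)
    (η : Equiv.Perm Ω) (φ : Ω → X → ℤ) (P : Measure Ω) : Prop :=
  ∀ᵐ ω ∂P, ∀ i : ℤ, m {x : X | ∃ n : ℕ, 1 ≤ n ∧ dwWalk T η φ ω i n x = i} = 1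

/-- The DWDE is transient: for `P`-a.e. `ω`, no state is recurrent. -/
def DWTransient [MeasurableSpace X] [MeasurableSpace Ω] (T : X → X) (m : Measure X)
    (η : Equiv.Perm Ω) (φ : Ω → X → ℤ) (P : Measure Ω) : Prop :=
  ∀ᵐ ω ∂P, ∀ i : ℤ, m {x : X | ∃ n : ℕ, 1 ≤ n ∧ dwWalk T η φ ω i n x = i} < 1

/-- Case (i): the walk diverges to `+∞` from every state, for a.e. environment and a.e.
base point. -/
def DWCaseI [MeasurableSpace X] [MeasurableSpace Ω] (T : X → X) (m : Measure X)
    (η : Equiv.Perm Ω) (φ : Ω → X → ℤ) (P : Measure Ω) : Prop :=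
  ∀ᵐ ω ∂P, ∀ᵐ x ∂m, ∀ i : ℤ,
    Tendsto (fun n : ℕ => dwWalk T η φ ω i n x) atTop atTop

/-- Case (ii): the walk diverges to `−∞` from every state, for a.e. environment and a.e.
base point. -/
def DWCaseII [MeasurableSpace X] [MeasurableSpace Ω] (T : X → X) (m : Measure X)
    (η : Equiv.Perm Ω) (φ : Ω → X → ℤ) (P : Measure Ω) : Prop :=
  ∀ᵐ ω ∂P, ∀ᵐ x ∂m, ∀ i : ℤ,
    Tendsto (fun n : ℕ => dwWalk T η φ ω i n x) atTop atBot

/-- Case (iii): for a.e. environment the walk diverges to `+∞` or to `−∞` with total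
probability one, each with probability strictly between `0` and `1`. -/
def DWCaseIII [MeasurableSpace X] [MeasurableSpace Ω] (T : X → X) (m : Measure X)
    (η : Equiv.Perm Ω) (φ : Ω → X → ℤ) (P : Measure Ω) : Prop :=
  ∀ᵐ ω ∂P, ∀ i : ℤ,
    m {x : X | Tendsto (fun n : ℕ => dwWalk T η φ ω i n x) atTop atTop} +
      m {x : X | Tendsto (fun n : ℕ => dwWalk T η φ ω i n x) atTop atBot} = 1 ∧
    0 < m {x : X | Tendsto (fun n : ℕ => dwWalk T η φ ω i n x) atTop atTop} ∧
    m {x : X | Tendsto (fun n : ℕ => dwWalk T η φ ω i n x) atTop atTop} < 1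

end DWDE

section AuxLemmas

variable {X : Type*} {Ω : Type*}

lemma cyl_nil (T : X → X) : cyl T ([] : List (Set X)) = univ := by
  ext x
  simp only [cyl, List.length_nil, mem_setOf_eq, mem_univ, iff_true]
  intro j
  exact j.elim0

lemma cyl_cons (T : X → X) (a : Set X) (w : List (Set X)) :
    cyl T (a :: w) = a ∩ T ⁻¹' cyl T w := by
  ext x
  simp only [cyl, mem_setOf_eq, mem_inter_iff, mem_preimage]
  constructor
  · intro h
    refine ⟨?_, fun j => ?_⟩
    · have := h ⟨0, Nat.succ_pos _⟩
      simpa using this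
    · have := h j.succ
      simpa [Function.iterate_succ_apply] using this
  · rintro ⟨h0, h1⟩ j
    refine Fin.cases ?_ (fun k => ?_) j
    · simpa using h0
    · have := h1 k
      simpa [Function.iterate_succ_apply] using this

/-- Cons as an embedding of pairs into lists. -/
def consEmb (X : Type*) : Set X × List (Set X) ↪ List (Set X) :=
  ⟨fun p => p.1 :: p.2, by
    rintro ⟨a, v⟩ ⟨b, w⟩ h
    simp only [List.cons.injEq] at h
    exact Prod.ext h.1 h.2⟩

/-- The finite set of words of length `n` over the alphabet `βL`. -/
def wordsF (βL : Finset (Set X)) : ℕ → Finset (List (Set X))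
  | 0 => {([] : List (Set X))}
  | n + 1 => (βL ×ˢ wordsF βL n).map (consEmb X)

lemma mem_wordsF_succ {βL : Finset (Set X)} {n : ℕ} {w : List (Set X)} :
    w ∈ wordsF βL (n + 1) ↔ ∃ a ∈ βL, ∃ v ∈ wordsF βL n, w = a :: v := by
  constructor
  · intro hw
    rw [wordsF] at hw
    obtain ⟨p, hp, rfl⟩ := Finset.mem_map.mp hw
    obtain ⟨h1, h2⟩ := Finset.mem_product.mp hp
    exact ⟨p.1, h1, p.2, h2, rfl⟩
  · rintro ⟨a, ha, v, hv, rfl⟩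
    rw [wordsF]
    exact Finset.mem_map.mpr ⟨(a, v), Finset.mem_product.mpr ⟨ha, hv⟩, rfl⟩

/-- The value of the walk after reading a word, starting from `i`, where `pt` selects a
point of each partition element. -/
def wval (η : Equiv.Perm Ω) (φ : Ω → X → ℤ) (ω : Ω) (pt : Set X → X) :
    ℤ → List (Set X) → ℤ
  | i, [] => i
  | i, a :: w => wval η φ ω pt (i + φ ((η ^ i) ω) (pt a)) w

/-- The itinerary word of a point. -/
def itinL (T : X → X) (pick : X → Set X) : ℕ → X → List (Set X)
  | 0, _ => []
  | n + 1, x => pick x :: itinL T pick n (T x)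

end AuxLemmas

set_option maxHeartbeats 1000000 in
/-- Main auxiliary lemma: under the hypotheses of Statement 19 with `#β < 2r`, for EVERY
environment `ω` the walk tends to `+∞` from every state, for `m`-a.e. `x`. -/
theorem main_aux {X : Type*} {Ω : Type*} [MeasurableSpace X]
    (T : X → X) (m : Measure X) [IsProbabilityMeasure m]
    (β : Set (Set X)) (hT : IsMarkovMap T m β)
    (hfull : ∀ a ∈ β, T '' a = univ) (hβfin : β.Finite)
    (g : X → ℝ)
    (hGibbs : ∃ C : ℝ, 1 ≤ C ∧ ∀ n : ℕ, 1 ≤ n → ∀ c : Set X, IsCyl T β n c → ∀ x ∈ c,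
      C⁻¹ * ∏ j ∈ Finset.range n, g (T^[j] x) ≤ (m c).toReal ∧
      (m c).toReal ≤ C * ∏ j ∈ Finset.range n, g (T^[j] x))
    (η : Equiv.Perm Ω) (φ : Ω → X → ℤ)
    (hconst : ∀ ω : Ω, ∀ a ∈ β, ∀ x ∈ a, ∀ y ∈ a, φ ω x = φ ω y)
    (r : ℕ) (hr1 : 1 ≤ r) (hr2 : r ≤ β.ncard - 1)
    (hvals : ∀ (ω : Ω) (x : X), φ ω x = 1 ∨ φ ω x = -1)
    (hcount : ∀ ω : Ω,
      {a ∈ β | ∀ x ∈ a, φ ω x = 1}.ncard = r ∧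
      {a ∈ β | ∀ x ∈ a, φ ω x = -1}.ncard = β.ncard - r)
    (H : (1 / 2 : ℝ) * Real.log (4 * (r : ℝ) * ((β.ncard : ℝ) - (r : ℝ))) <
        sInf (Set.range fun x : X => - Real.log (g x)))
    (hcase : β.ncard < 2 * r) (ω : Ω) :
    ∀ᵐ x ∂m, ∀ i : ℤ,
      Tendsto (fun n : ℕ => dwWalk T η φ ω i n x) atTop atTop := by
  classical
  obtain ⟨C, hC1, hCb⟩ := hGibbs
  have hC0 : (0 : ℝ) < C := lt_of_lt_of_le one_pos hC1
  -- X is nonempty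
  have hXne : Nonempty X := by
    by_contra h
    rw [not_nonempty_iff] at h
    have h1 : m univ = 1 := measure_univ
    rw [Set.univ_eq_empty_iff.mpr h] at h1
    simp at h1
  inhabit X
  -- a partition element containing each point
  have hcov : ∀ x : X, ∃ a, a ∈ β ∧ x ∈ a := by
    intro x
    have hx : x ∈ ⋃₀ β := by rw [hT.sUnion_eq]; trivial
    simpa [Set.mem_sUnion] using hx
  choose pick hpickβ hpickmem using hcov
  -- a point of each partition element
  have hne : ∀ a ∈ β, a.Nonempty := by
    intro a ha
    have h1 := hfull a ha
    have h2 : (T '' a).Nonempty := by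
      rw [h1]; exact univ_nonempty
    exact Set.Nonempty.of_image h2
  set pt : Set X → X := fun a =>
    if h : a.Nonempty then h.choose else default with hpt_def
  have hpt : ∀ a ∈ β, pt a ∈ a := by
    intro a ha
    have h := hne a ha
    simp only [hpt_def, dif_pos h]
    exact h.choose_spec
  set βL := hβfin.toFinset with hβL
  have hmemβL : ∀ a : Set X, a ∈ βL ↔ a ∈ β := fun a => hβfin.mem_toFinset
  set N := β.ncard with hNdef
  -- arithmetic
  have hβne : β.Nonempty := ⟨pick default, hpickβ default⟩
  have hN1 : 1 ≤ N := (Set.ncard_pos hβfin).mpr hβne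
  have hrN : r + 1 ≤ N := by omega
  have hrR : (1 : ℝ) ≤ (r : ℝ) := by exact_mod_cast hr1
  have hNrR : (1 : ℝ) ≤ (N : ℝ) - (r : ℝ) := by
    have h1 : ((r : ℝ) + 1) ≤ (N : ℝ) := by exact_mod_cast hrN
    linarith
  set u := Real.sqrt r with hu
  set v := Real.sqrt ((N : ℝ) - r) with hv
  have hu0 : 0 < u := Real.sqrt_pos.mpr (by linarith)
  have hv0 : 0 < v := Real.sqrt_pos.mpr (by linarith)
  have hu2 : u * u = (r : ℝ) := Real.mul_self_sqrt (by linarith)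
  have hv2 : v * v = (N : ℝ) - r := Real.mul_self_sqrt (by linarith)
  have hu1 : 1 ≤ u := by nlinarith
  have hv1 : 1 ≤ v := by nlinarith
  set t := v / u with htdef
  have ht0 : 0 < t := div_pos hv0 hu0
  have ht1 : t ≤ 1 := by
    rw [div_le_one hu0]
    rw [hu, hv]
    apply Real.sqrt_le_sqrt
    have h2 : (N : ℝ) < 2 * (r : ℝ) := by exact_mod_cast hcase
    linarith
  set c₀ := sInf (Set.range fun x : X => - Real.log (g x)) with hc₀
  have h2uv : (0 : ℝ) < 2 * (u * v) := by positivity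
  have hlog : (1 / 2 : ℝ) * Real.log (4 * (r : ℝ) * ((N : ℝ) - r)) =
      Real.log (2 * (u * v)) := by
    have h4 : 4 * (r : ℝ) * ((N : ℝ) - r) = (2 * (u * v)) ^ 2 := by nlinarith
    rw [h4, Real.log_pow]
    push_cast
    ring
  have hc₀gt : Real.log (2 * (u * v)) < c₀ := by rw [← hlog]; exact H
  have h2uv1 : (1 : ℝ) < 2 * (u * v) := by nlinarith
  have hc₀pos : 0 < c₀ := lt_trans (Real.log_pos h2uv1) hc₀gt
  set q := Real.exp (-c₀) with hqdef
  have hq0 : 0 < q := Real.exp_pos _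
  have hqlt : q < (2 * (u * v))⁻¹ := by
    rw [hqdef, ← Real.exp_log (show (0 : ℝ) < (2 * (u * v))⁻¹ by positivity)]
    apply Real.exp_lt_exp.mpr
    rw [Real.log_inv]
    linarith
  -- bounds on g
  have hbdd : BddBelow (Set.range fun x : X => - Real.log (g x)) := by
    by_contra hb
    rw [hc₀, Real.sInf_of_not_bddBelow hb] at hc₀pos
    exact lt_irrefl _ hc₀pos
  have hgle : ∀ y : X, 0 ≤ g y ∧ g y ≤ q := by
    intro y
    have hcyl1 : IsCyl T β 1 (pick y) := by
      refine ⟨[pick y], rfl, ?_, ?_⟩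
      · intro s hs
        rw [List.mem_singleton] at hs
        rw [hs]
        exact hpickβ y
      · rw [cyl_cons, cyl_nil]
        simp
    have hub := (hCb 1 le_rfl (pick y) hcyl1 y (hpickmem y)).2
    simp only [Finset.prod_range_one, Function.iterate_zero_apply] at hub
    have hmnn : (0 : ℝ) ≤ (m (pick y)).toReal := ENNReal.toReal_nonneg
    have hg0 : 0 ≤ g y := by
      have h1 : C * 0 ≤ C * g y := by
        rw [mul_zero]
        exact le_trans hmnn hub
      exact le_of_mul_le_mul_left h1 hC0
    refine ⟨hg0, ?_⟩
    have hlog_le : c₀ ≤ - Real.log (g y) := csInf_le hbdd ⟨y, rfl⟩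
    rcases hg0.eq_or_lt with he | hpos
    · rw [← he]; exact hq0.le
    · rw [hqdef, ← Real.exp_log hpos]
      exact Real.exp_le_exp.mpr (by linarith)
  -- B and θ
  set B := (r : ℝ) * t + ((N : ℝ) - r) * t⁻¹ with hBdef
  have hBeq : B = 2 * (u * v) := by
    rw [hBdef, htdef]
    rw [inv_div]
    field_simp
    nlinarith
  have hB0 : 0 < B := by rw [hBeq]; positivity
  set θ := B * q with hθdef
  have hθ0 : 0 ≤ θ := by positivity
  have hθ1 : θ < 1 := by
    rw [hθdef, hBeq]
    calc 2 * (u * v) * q < 2 * (u * v) * (2 * (u * v))⁻¹ :=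
          mul_lt_mul_of_pos_left hqlt h2uv
    _ = 1 := mul_inv_cancel₀ (ne_of_gt h2uv)
  -- cardinality of the plus/minus sets at each site
  have hrleN : r ≤ N := by omega
  have hcard1 : ∀ ω' : Ω,
      (βL.filter fun a => φ ω' (pt a) = 1).card = r := by
    intro ω'
    have h := (hcount ω').1
    have hseteq : {a ∈ β | ∀ x ∈ a, φ ω' x = 1} =
        ↑(βL.filter fun a => φ ω' (pt a) = 1) := by
      ext a
      simp only [Set.mem_setOf_eq, Finset.coe_filter, hmemβL]
      constructor
      · rintro ⟨ha, hall⟩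
        exact ⟨ha, hall _ (hpt a ha)⟩
      · rintro ⟨ha, hone⟩
        exact ⟨ha, fun x hx => (hconst ω' a ha x hx (pt a) (hpt a ha)).trans hone⟩
    rw [hseteq, Set.ncard_coe_finset] at h
    exact h
  have hcard2 : ∀ ω' : Ω,
      (βL.filter fun a => ¬ φ ω' (pt a) = 1).card = N - r := by
    intro ω'
    have h := (hcount ω').2
    have hfeq : (βL.filter fun a => ¬ φ ω' (pt a) = 1) =
        (βL.filter fun a => φ ω' (pt a) = -1) := by
      ext a
      simp only [Finset.mem_filter]
      constructor
      · rintro ⟨ha, hne1⟩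
        exact ⟨ha, (hvals ω' (pt a)).resolve_left hne1⟩
      · rintro ⟨ha, hm1⟩
        exact ⟨ha, by omega⟩
    have hseteq : {a ∈ β | ∀ x ∈ a, φ ω' x = -1} =
        ↑(βL.filter fun a => φ ω' (pt a) = -1) := by
      ext a
      simp only [Set.mem_setOf_eq, Finset.coe_filter, hmemβL]
      constructor
      · rintro ⟨ha, hall⟩
        exact ⟨ha, hall _ (hpt a ha)⟩
      · rintro ⟨ha, hone⟩
        exact ⟨ha, fun x hx => (hconst ω' a ha x hx (pt a) (hpt a ha)).trans hone⟩
    rw [hseteq, Set.ncard_coe_finset] at h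
    rw [hfeq]
    exact h
  -- sum of weights over one site
  have hsumt : ∀ i : ℤ, ∑ a ∈ βL, t ^ (φ ((η ^ i) ω) (pt a)) = B := by
    intro i
    rw [← Finset.sum_filter_add_sum_filter_not βL (fun a => φ ((η ^ i) ω) (pt a) = 1)]
    have e1 : ∑ a ∈ βL.filter (fun a => φ ((η ^ i) ω) (pt a) = 1),
        t ^ (φ ((η ^ i) ω) (pt a)) = (r : ℝ) * t := by
      rw [Finset.sum_congr rfl (fun a ha => by
        rw [(Finset.mem_filter.mp ha).2, zpow_one])]
      rw [Finset.sum_const, hcard1, nsmul_eq_mul]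
    have e2 : ∑ a ∈ βL.filter (fun a => ¬ φ ((η ^ i) ω) (pt a) = 1),
        t ^ (φ ((η ^ i) ω) (pt a)) = ((N : ℝ) - r) * t⁻¹ := by
      rw [Finset.sum_congr rfl (fun a ha => by
        have hm1 := (hvals ((η ^ i) ω) (pt a)).resolve_left (Finset.mem_filter.mp ha).2
        rw [hm1, zpow_neg_one])]
      rw [Finset.sum_const, hcard2, nsmul_eq_mul]
      congr 1
      push_cast [Nat.cast_sub hrleN]
      ring
    rw [e1, e2, hBdef]
  -- the weighted sum over all words of length n
  have hsum : ∀ n : ℕ, ∀ i : ℤ,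
      ∑ w ∈ wordsF βL n, t ^ (wval η φ ω pt i w - i) = B ^ n := by
    intro n
    induction n with
    | zero =>
      intro i
      simp [wordsF, wval]
    | succ n ih =>
      intro i
      rw [wordsF]
      rw [Finset.sum_map]
      rw [Finset.sum_product]
      have hterm : ∀ a : Set X, ∀ w : List (Set X),
          t ^ (wval η φ ω pt i (a :: w) - i) =
            t ^ (wval η φ ω pt (i + φ ((η ^ i) ω) (pt a)) w
              - (i + φ ((η ^ i) ω) (pt a))) * t ^ (φ ((η ^ i) ω) (pt a)) := by
        intro a w
        rw [← zpow_add₀ (ne_of_gt ht0)]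
        congr 1
        show wval η φ ω pt (i + φ ((η ^ i) ω) (pt a)) w - i = _
        ring
      calc ∑ a ∈ βL, ∑ w ∈ wordsF βL n, t ^ (wval η φ ω pt i (a :: w) - i)
          = ∑ a ∈ βL, B ^ n * t ^ (φ ((η ^ i) ω) (pt a)) := by
            refine Finset.sum_congr rfl fun a _ => ?_
            rw [Finset.sum_congr rfl fun w _ => hterm a w, ← Finset.sum_mul,
              ih (i + φ ((η ^ i) ω) (pt a))]
      _ = B ^ n * ∑ a ∈ βL, t ^ (φ ((η ^ i) ω) (pt a)) := by
            rw [← Finset.mul_sum]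
      _ = B ^ (n + 1) := by rw [hsumt i]; ring
  -- cardinality bound via Chernoff
  have hcardle : ∀ (n : ℕ) (i L : ℤ),
      ((((wordsF βL n).filter fun w => wval η φ ω pt i w ≤ L).card : ℝ)) ≤
        t ^ (i - L) * B ^ n := by
    intro n i L
    set F := (wordsF βL n).filter fun w => wval η φ ω pt i w ≤ L with hF
    have h1 : (F.card : ℝ) * t ^ (L - i) ≤ B ^ n := by
      rw [← hsum n i]
      calc (F.card : ℝ) * t ^ (L - i) = ∑ _w ∈ F, t ^ (L - i) := by
            rw [Finset.sum_const, nsmul_eq_mul]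
      _ ≤ ∑ w ∈ F, t ^ (wval η φ ω pt i w - i) := by
            refine Finset.sum_le_sum fun w hw => ?_
            refine zpow_le_zpow_right_of_le_one₀ ht0 ht1 ?_
            have := (Finset.mem_filter.mp hw).2
            omega
      _ ≤ ∑ w ∈ wordsF βL n, t ^ (wval η φ ω pt i w - i) := by
            refine Finset.sum_le_sum_of_subset_of_nonneg (Finset.filter_subset _ _)
              fun w _ _ => ?_
            positivity
    have hz : (0 : ℝ) < t ^ (i - L) := zpow_pos ht0 _
    calc (F.card : ℝ) = (F.card : ℝ) * t ^ (L - i) * t ^ (i - L) := by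
          rw [mul_assoc, ← zpow_add₀ (ne_of_gt ht0)]
          norm_num
    _ ≤ B ^ n * t ^ (i - L) := mul_le_mul_of_nonneg_right h1 hz.le
    _ = t ^ (i - L) * B ^ n := mul_comm _ _
  -- properties of words
  have hwords : ∀ n : ℕ, ∀ w ∈ wordsF βL n, w.length = n ∧ ∀ s ∈ w, s ∈ β := by
    intro n
    induction n with
    | zero =>
      intro w hw
      simp only [wordsF, Finset.mem_singleton] at hw
      subst hw
      simp
    | succ n ih =>
      intro w hw
      obtain ⟨a, ha, v, hv, rfl⟩ := mem_wordsF_succ.mp hw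
      obtain ⟨hlen, hmem⟩ := ih v hv
      refine ⟨by simp [hlen], fun s hs => ?_⟩
      rcases List.mem_cons.mp hs with hs0 | hs'
      · rw [hs0]; exact (hmemβL a).mp ha
      · exact hmem s hs'
  -- measure of a cylinder
  have hcylm : ∀ n : ℕ, 1 ≤ n → ∀ w ∈ wordsF βL n,
      m (cyl T w) ≤ ENNReal.ofReal (C * q ^ n) := by
    intro n hn w hw
    rcases Set.eq_empty_or_nonempty (cyl T w) with he | hne'
    · rw [he]; simp
    · obtain ⟨x, hx⟩ := hne'
      obtain ⟨hlen, hmem⟩ := hwords n w hw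
      have hic : IsCyl T β n (cyl T w) := ⟨w, hlen, hmem, rfl⟩
      have hub := (hCb n hn _ hic x hx).2
      have hprod : ∏ j ∈ Finset.range n, g (T^[j] x) ≤ q ^ n := by
        calc ∏ j ∈ Finset.range n, g (T^[j] x) ≤ ∏ _j ∈ Finset.range n, q :=
              Finset.prod_le_prod (fun j _ => (hgle _).1) (fun j _ => (hgle _).2)
        _ = q ^ n := by rw [Finset.prod_const, Finset.card_range]
      have hle : (m (cyl T w)).toReal ≤ C * q ^ n :=
        le_trans hub (mul_le_mul_of_nonneg_left hprod hC0.le)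
      calc m (cyl T w) = ENNReal.ofReal (m (cyl T w)).toReal :=
            (ENNReal.ofReal_toReal (measure_ne_top m _)).symm
      _ ≤ ENNReal.ofReal (C * q ^ n) := ENNReal.ofReal_le_ofReal hle
  -- itinerary facts
  have hitin_mem : ∀ n : ℕ, ∀ x : X, itinL T pick n x ∈ wordsF βL n := by
    intro n
    induction n with
    | zero => intro x; simp [itinL, wordsF]
    | succ n ih =>
      intro x
      exact mem_wordsF_succ.mpr ⟨pick x, (hmemβL _).mpr (hpickβ x),
        itinL T pick n (T x), ih (T x), rfl⟩
  have hitin_cyl : ∀ n : ℕ, ∀ x : X, x ∈ cyl T (itinL T pick n x) := by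
    intro n
    induction n with
    | zero => intro x; rw [itinL, cyl_nil]; trivial
    | succ n ih =>
      intro x
      rw [itinL, cyl_cons]
      exact ⟨hpickmem x, ih (T x)⟩
  have hwalk_eq : ∀ n : ℕ, ∀ i : ℤ, ∀ x : X,
      dwWalk T η φ ω i n x = wval η φ ω pt i (itinL T pick n x) := by
    intro n
    induction n with
    | zero => intro i x; simp [dwWalk, itinL, wval]
    | succ n ih =>
      intro i x
      have hstep : env η φ ω i x = φ ((η ^ i) ω) (pt (pick x)) := by
        simpa [env] using
          hconst ((η ^ i) ω) (pick x) (hpickβ x) x (hpickmem x) (pt (pick x))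
            (hpt _ (hpickβ x))
      calc dwWalk T η φ ω i (n + 1) x
          = dwWalk T η φ ω (i + env η φ ω i x) n (T x) := by
            simp [dwWalk, Function.iterate_succ_apply, dwSkew]
      _ = wval η φ ω pt (i + env η φ ω i x) (itinL T pick n (T x)) := ih _ _
      _ = wval η φ ω pt i (itinL T pick (n + 1) x) := by
            rw [hstep]
            rfl
  -- the master measure bound
  have hmb : ∀ (i L : ℤ) (n : ℕ), 1 ≤ n →
      m {x | dwWalk T η φ ω i n x ≤ L} ≤
        ENNReal.ofReal ((C * t ^ (i - L)) * θ ^ n) := by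
    intro i L n hn
    set F := (wordsF βL n).filter fun w => wval η φ ω pt i w ≤ L with hF
    have hsub : {x | dwWalk T η φ ω i n x ≤ L} ⊆ ⋃ w ∈ F, cyl T w := by
      intro x hx
      refine Set.mem_iUnion₂.mpr ⟨itinL T pick n x, ?_, hitin_cyl n x⟩
      refine Finset.mem_filter.mpr ⟨hitin_mem n x, ?_⟩
      rw [← hwalk_eq n i x]
      exact hx
    calc m {x | dwWalk T η φ ω i n x ≤ L} ≤ m (⋃ w ∈ F, cyl T w) :=
          measure_mono hsub
    _ ≤ ∑ w ∈ F, m (cyl T w) := measure_biUnion_finset_le F _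
    _ ≤ ∑ _w ∈ F, ENNReal.ofReal (C * q ^ n) :=
          Finset.sum_le_sum fun w hw => hcylm n hn w (Finset.mem_filter.mp hw).1
    _ = F.card • ENNReal.ofReal (C * q ^ n) := by rw [Finset.sum_const]
    _ = (F.card : ℝ≥0∞) * ENNReal.ofReal (C * q ^ n) := by rw [nsmul_eq_mul]
    _ = ENNReal.ofReal ((F.card : ℝ) * (C * q ^ n)) := by
          rw [← ENNReal.ofReal_natCast F.card,
            ← ENNReal.ofReal_mul (Nat.cast_nonneg _)]
    _ ≤ ENNReal.ofReal ((t ^ (i - L) * B ^ n) * (C * q ^ n)) := by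
          refine ENNReal.ofReal_le_ofReal ?_
          refine mul_le_mul_of_nonneg_right (hcardle n i L) ?_
          positivity
    _ = ENNReal.ofReal ((C * t ^ (i - L)) * θ ^ n) := by
          rw [hθdef, mul_pow]
          ring_nf
  -- Borel–Cantelli for each (i, L)
  have hBC : ∀ i L : ℤ, ∀ᵐ x ∂m, ∀ᶠ n in atTop, L < dwWalk T η φ ω i n x := by
    intro i L
    set K := max (C * t ^ (i - L)) 1 with hK
    have hK1 : (1 : ℝ) ≤ K := le_max_right _ _
    have hall : ∀ n : ℕ, m {x | dwWalk T η φ ω i n x ≤ L} ≤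
        ENNReal.ofReal K * ENNReal.ofReal θ ^ n := by
      intro n
      rcases Nat.eq_zero_or_pos n with rfl | hn
      · rw [pow_zero, mul_one]
        exact le_trans prob_le_one (ENNReal.one_le_ofReal.mpr hK1)
      · calc m {x | dwWalk T η φ ω i n x ≤ L}
            ≤ ENNReal.ofReal ((C * t ^ (i - L)) * θ ^ n) := hmb i L n hn
        _ ≤ ENNReal.ofReal (K * θ ^ n) := by
              refine ENNReal.ofReal_le_ofReal ?_
              refine mul_le_mul_of_nonneg_right (le_max_left _ _) ?_
              positivity
        _ = ENNReal.ofReal K * ENNReal.ofReal θ ^ n := by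
              rw [ENNReal.ofReal_mul (by linarith), ENNReal.ofReal_pow hθ0]
    have hsumfin : (∑' n : ℕ, m {x | dwWalk T η φ ω i n x ≤ L}) ≠ ⊤ := by
      have hle : (∑' n : ℕ, m {x | dwWalk T η φ ω i n x ≤ L}) ≤
          ∑' n : ℕ, ENNReal.ofReal K * ENNReal.ofReal θ ^ n :=
        ENNReal.tsum_le_tsum hall
      refine ne_top_of_le_ne_top ?_ hle
      rw [ENNReal.tsum_mul_left, ENNReal.tsum_geometric]
      refine ENNReal.mul_ne_top ENNReal.ofReal_ne_top ?_
      rw [Ne, ENNReal.inv_eq_top, tsub_eq_zero_iff_le]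
      exact not_le.mpr (ENNReal.ofReal_lt_one.mpr hθ1)
    have h0 := measure_setOf_frequently_eq_zero (μ := m)
      (p := fun n x => dwWalk T η φ ω i n x ≤ L) hsumfin
    have hae := measure_eq_zero_iff_ae_notMem.mp h0
    filter_upwards [hae] with x hx
    have hx' : ¬ ∃ᶠ n in atTop, dwWalk T η φ ω i n x ≤ L := hx
    exact (Filter.not_frequently.mp hx').mono fun n hn => not_le.mp hn
  have hae2 : ∀ᵐ x ∂m, ∀ i L : ℤ, ∀ᶠ n in atTop, L < dwWalk T η φ ω i n x :=
    ae_all_iff.mpr fun i => ae_all_iff.mpr fun L => hBC i L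
  filter_upwards [hae2] with x hx i
  rw [tendsto_atTop]
  intro b
  exact (hx i b).mono fun n h => h.le


/-- Theorem: transient DWDEs driven by full-branch Gibbs–Markov maps.
Let the DWDE on `ℤ` have an ergodic stationary environment and be driven by a full-branch
Gibbs–Markov map `T` with finite Markov partition `β`, Gibbs density `g` (with potential
`h = −ln g`), and suppose every transition function takes only values `±1`, taking the
value `+1` on exactly `r` partition elements and `−1` on the remaining `#β − r`.  If
`inf h > (1/2)·ln(4r(#β − r))` then the walk diverges to `+∞` when `r > #β/2` and to
`−∞` when `r < #β/2`, for all states, `P`-a.e. environment and `m`-a.e. base point. -/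
theorem statement19 {Ω : Type*} [MeasurableSpace X] [MeasurableSpace Ω]
    (T : X → X) (m : Measure X) [IsProbabilityMeasure m]
    (β : Set (Set X)) (hT : IsMarkovMap T m β) (hsep : SeparatesPoints T β)
    (hfull : ∀ a ∈ β, T '' a = univ) (hβfin : β.Finite)
    (g : X → ℝ)
    (hGibbs : ∃ C : ℝ, 1 ≤ C ∧ ∀ n : ℕ, 1 ≤ n → ∀ c : Set X, IsCyl T β n c → ∀ x ∈ c,
      C⁻¹ * ∏ j ∈ Finset.range n, g (T^[j] x) ≤ (m c).toReal ∧
      (m c).toReal ≤ C * ∏ j ∈ Finset.range n, g (T^[j] x))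
    (P : Measure Ω) [IsProbabilityMeasure P]
    (η : Equiv.Perm Ω) (hη : Measurable (η : Ω → Ω)) (hη' : Measurable (η.symm : Ω → Ω))
    (herg : Ergodic (η : Ω → Ω) P)
    (φ : Ω → X → ℤ) (hφm : ∀ ω : Ω, Measurable (φ ω))
    (hconst : ∀ ω : Ω, ∀ a ∈ β, ∀ x ∈ a, ∀ y ∈ a, φ ω x = φ ω y)
    (r : ℕ) (hr1 : 1 ≤ r) (hr2 : r ≤ β.ncard - 1)
    (hvals : ∀ (ω : Ω) (x : X), φ ω x = 1 ∨ φ ω x = -1)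
    (hcount : ∀ ω : Ω,
      {a ∈ β | ∀ x ∈ a, φ ω x = 1}.ncard = r ∧
      {a ∈ β | ∀ x ∈ a, φ ω x = -1}.ncard = β.ncard - r) :
    ((1 / 2 : ℝ) * Real.log (4 * (r : ℝ) * ((β.ncard : ℝ) - (r : ℝ))) <
        sInf (Set.range fun x : X => - Real.log (g x)) →
      β.ncard < 2 * r →
      ∀ᵐ ω ∂P, ∀ᵐ x ∂m, ∀ i : ℤ,
        Tendsto (fun n : ℕ => dwWalk T η φ ω i n x) atTop atTop) ∧
    ((1 / 2 : ℝ) * Real.log (4 * (r : ℝ) * ((β.ncard : ℝ) - (r : ℝ))) <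
        sInf (Set.range fun x : X => - Real.log (g x)) →
      2 * r < β.ncard →
      ∀ᵐ ω ∂P, ∀ᵐ x ∂m, ∀ i : ℤ,
        Tendsto (fun n : ℕ => dwWalk T η φ ω i n x) atTop atBot) := by
  constructor
  · intro H hcase
    exact Filter.Eventually.of_forall fun ω =>
      main_aux T m β hT hfull hβfin g hGibbs η φ hconst r hr1 hr2 hvals hcount H hcase ω
  · intro H hcase
    -- reduce to the `+∞` case by negating the transition functions and reversing time
    set ψ : Ω → X → ℤ := fun ω' x => - φ ω' x with hψ
    have hrleN : r ≤ β.ncard := by omega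
    have hconst' : ∀ ω' : Ω, ∀ a ∈ β, ∀ x ∈ a, ∀ y ∈ a, ψ ω' x = ψ ω' y := by
      intro ω' a ha x hx y hy
      simp only [hψ, neg_inj]
      exact hconst ω' a ha x hx y hy
    have hvals' : ∀ (ω' : Ω) (x : X), ψ ω' x = 1 ∨ ψ ω' x = -1 := by
      intro ω' x
      rcases hvals ω' x with h | h <;> simp [hψ, h]
    have hcount' : ∀ ω' : Ω,
        {a ∈ β | ∀ x ∈ a, ψ ω' x = 1}.ncard = β.ncard - r ∧
        {a ∈ β | ∀ x ∈ a, ψ ω' x = -1}.ncard = β.ncard - (β.ncard - r) := by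
      intro ω'
      have h1 : {a ∈ β | ∀ x ∈ a, ψ ω' x = 1} = {a ∈ β | ∀ x ∈ a, φ ω' x = -1} := by
        ext a
        simp only [Set.mem_setOf_eq, hψ]
        constructor
        · rintro ⟨ha, hall⟩; exact ⟨ha, fun x hx => by have := hall x hx; omega⟩
        · rintro ⟨ha, hall⟩; exact ⟨ha, fun x hx => by have := hall x hx; omega⟩
      have h2 : {a ∈ β | ∀ x ∈ a, ψ ω' x = -1} = {a ∈ β | ∀ x ∈ a, φ ω' x = 1} := by
        ext a
        simp only [Set.mem_setOf_eq, hψ]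
        constructor
        · rintro ⟨ha, hall⟩; exact ⟨ha, fun x hx => by have := hall x hx; omega⟩
        · rintro ⟨ha, hall⟩; exact ⟨ha, fun x hx => by have := hall x hx; omega⟩
      rw [h1, h2, (hcount ω').1, (hcount ω').2]
      refine ⟨rfl, by omega⟩
    have hcastNr : ((β.ncard - r : ℕ) : ℝ) = (β.ncard : ℝ) - (r : ℝ) :=
      Nat.cast_sub hrleN
    have H' : (1 / 2 : ℝ) *
        Real.log (4 * ((β.ncard - r : ℕ) : ℝ) * ((β.ncard : ℝ) - ((β.ncard - r : ℕ) : ℝ))) <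
        sInf (Set.range fun x : X => - Real.log (g x)) := by
      have harg : 4 * ((β.ncard - r : ℕ) : ℝ) * ((β.ncard : ℝ) - ((β.ncard - r : ℕ) : ℝ)) =
          4 * (r : ℝ) * ((β.ncard : ℝ) - (r : ℝ)) := by
        rw [hcastNr]; ring
      rw [harg]
      exact H
    have hr1' : 1 ≤ β.ncard - r := by omega
    have hr2' : β.ncard - r ≤ β.ncard - 1 := by omega
    have hcase' : β.ncard < 2 * (β.ncard - r) := by omega
    -- the transformed walk is the negative of the original one
    have hpair : ∀ (ω : Ω) (n : ℕ) (p : X × ℤ),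
        (dwSkew T (env η⁻¹ ψ ω))^[n] (p.1, -p.2) =
          (((dwSkew T (env η φ ω))^[n] p).1, -((dwSkew T (env η φ ω))^[n] p).2) := by
      intro ω n
      induction n with
      | zero => intro p; simp
      | succ n ih =>
        intro p
        rw [Function.iterate_succ_apply, Function.iterate_succ_apply]
        have h1 : dwSkew T (env η⁻¹ ψ ω) (p.1, -p.2) =
            ((dwSkew T (env η φ ω) p).1, -(dwSkew T (env η φ ω) p).2) := by
          simp only [dwSkew, env, hψ, inv_zpow', neg_neg]
          exact Prod.ext rfl (by ring)
        rw [h1]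
        exact ih (dwSkew T (env η φ ω) p)
    refine Filter.Eventually.of_forall fun ω => ?_
    have hmain := main_aux T m β hT hfull hβfin g hGibbs η⁻¹ ψ hconst'
      (β.ncard - r) hr1' hr2' hvals' hcount' H' hcase' ω
    filter_upwards [hmain] with x hx i
    have h := hx (-i)
    have heq : ∀ n : ℕ, dwWalk T η φ ω i n x = - dwWalk T η⁻¹ ψ ω (-i) n x := by
      intro n
      have := congrArg Prod.snd (hpair ω n (x, i))
      simp only [dwWalk]
      simp only at this
      rw [this]
      ring
    rw [show (fun n : ℕ => dwWalk T η φ ω i n x) =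
        fun n : ℕ => - dwWalk T η⁻¹ ψ ω (-i) n x from funext heq]
    exact tendsto_neg_atTop_atBot.comp h

end DWDEPaper
end
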